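/- Under the Gaussian mixture model f = Σ_ℓ w_ℓ φ_{Σ_ℓ}(·−μ_ℓ), with kernel estimator f̂ = (1/n)Σ_i φ_H(·−x_i) from an i.i.d. sample, the expected integrated square error satisfies E[d_ISE(f̂, f)] = (1/n)(4π)^{-D/2}|H|^{-1/2} + wᵀ((1 − 1/n)Ω₂ − 2Ω₁ + Ω₀)w, where [Ω_α]_{ij} = φ_{αH + Σ_i + Σ_j}(μ_i − μ_j) for α ∈ {0,1,2}. -/

import Mathlib

/-!
Everything rests on the convolution identity `∫ φ_A(x - a) φ_B(x - b) dx = φ_{A+B}(a - b)`,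
obtained by completing the square. Both `f̂` and `f` are finite combinations of shifted
Gaussians, so for a fixed sample the ISE is
`n⁻² ∑ᵢⱼ φ_{2H}(xᵢ - xⱼ) - 2n⁻¹ ∑ᵢ (φ_H * f)(xᵢ) + ∫ f²`.
Under the i.i.d. law the diagonal terms give `n⁻¹ φ_{2H}(0)`, the `n(n - 1)` off-diagonal pairs
are distributed as `f ⊗ f`, and every remaining expectation is again a convolution of Gaussians,
i.e. an entry of one of the matrices `Ω_α`.
-/

open MeasureTheory Real Matrix

/-- The `D`-variate Gaussian density with mean `0` and covariance matrix `H`. -/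
noncomputable def gauss (D : ℕ) (H : Matrix (Fin D) (Fin D) ℝ) (x : Fin D → ℝ) : ℝ :=
  (2 * Real.pi) ^ (-(D : ℝ) / 2) * H.det ^ (-(1 : ℝ) / 2) *
    Real.exp (-(1 / 2) * (x ⬝ᵥ (H⁻¹ *ᵥ x)))

open ProbabilityTheory

section ChangeOfVariables

variable {ι : Type*} [Fintype ι] [DecidableEq ι] {E : Type*} [NormedAddCommGroup E]
  {S : Matrix ι ι ℝ}

theorem measurableEmbedding_mulVec (hS : S.det ≠ 0) : MeasurableEmbedding (S *ᵥ ·) :=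
  letI := S.invertibleOfIsUnitDet hS.isUnit
  (S.toLinearEquiv' this).toContinuousLinearEquiv.toHomeomorph.measurableEmbedding

theorem map_mulVec_volume (hS : S.det ≠ 0) :
    Measure.map (S *ᵥ ·) volume = ENNReal.ofReal |S.det⁻¹| • volume :=
  Real.map_matrix_volume_pi_eq_smul_volume_pi hS

theorem integrable_comp_mulVec_iff (hS : S.det ≠ 0) {g : (ι → ℝ) → E} :
    Integrable (fun x => g (S *ᵥ x)) ↔ Integrable g := by
  rw [← Function.comp_def, ← (measurableEmbedding_mulVec hS).integrable_map_iff,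
    map_mulVec_volume hS, integrable_smul_measure (by simpa using hS) ENNReal.ofReal_ne_top]

theorem integral_comp_mulVec [NormedSpace ℝ E] (hS : S.det ≠ 0) (g : (ι → ℝ) → E) :
    ∫ x, g (S *ᵥ x) = |S.det|⁻¹ • ∫ y, g y := by
  rw [← (measurableEmbedding_mulVec hS).integral_map, map_mulVec_volume hS,
    integral_smul_measure, ENNReal.toReal_ofReal (by positivity), abs_inv]

end ChangeOfVariables

section Density

variable {D : ℕ} {H : Matrix (Fin D) (Fin D) ℝ}

theorem gauss_pos (hH : H.PosDef) (x : Fin D → ℝ) : 0 < gauss D H x := by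
  have := hH.det_pos
  unfold gauss
  positivity

theorem gauss_le_gauss_zero (hH : H.PosDef) (x : Fin D → ℝ) : gauss D H x ≤ gauss D H 0 := by
  have hq : 0 ≤ x ⬝ᵥ (H⁻¹ *ᵥ x) := by
    simpa using hH.inv.posSemidef.dotProduct_mulVec_nonneg x
  have := hH.det_pos
  unfold gauss
  simp only [mulVec_zero, dotProduct_zero, mul_zero, Real.exp_zero, mul_one]
  exact mul_le_of_le_one_right (by positivity) (Real.exp_le_one_iff.2 (by linarith))

@[fun_prop]
theorem continuous_gauss (H : Matrix (Fin D) (Fin D) ℝ) : Continuous (gauss D H) := by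
  unfold gauss
  fun_prop

theorem gauss_add_self_zero (hH : H.PosDef) :
    gauss D (H + H) 0 = (4 * π) ^ (-(D : ℝ) / 2) * H.det ^ (-(1 : ℝ) / 2) := by
  have h2D : ((2 : ℝ) ^ D) ^ (-(1 : ℝ) / 2) = 2 ^ (-(D : ℝ) / 2) := by
    rw [← Real.rpow_natCast, ← Real.rpow_mul zero_le_two]
    ring_nf
  simp only [gauss, zero_dotProduct, mul_zero, Real.exp_zero, mul_one, ← two_smul ℝ H,
    det_smul, Fintype.card_fin]
  rw [Real.mul_rpow (x := 2 ^ D) (by positivity) hH.det_pos.le, h2D,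
    show (4 : ℝ) * π = 2 * (2 * π) by ring,
    Real.mul_rpow (x := 2) (y := 2 * π) zero_le_two (by positivity)]
  ring

theorem exists_inv_eq_transpose_mul_self (hH : H.PosDef) :
    ∃ S : Matrix (Fin D) (Fin D) ℝ, H⁻¹ = Sᵀ * S := by
  open scoped MatrixOrder in
  obtain ⟨S, hS⟩ := CStarAlgebra.nonneg_iff_eq_star_mul_self.mp hH.inv.posSemidef.nonneg
  exact ⟨S, by rw [hS, star_eq_conjTranspose, conjTranspose_eq_transpose_of_trivial]⟩

theorem integral_prod_exp_neg_half_sq :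
    ∫ y : Fin D → ℝ, ∏ i, Real.exp (-(1 / 2) * y i ^ 2) = (2 * π) ^ ((D : ℝ) / 2) := by
  rw [integral_fintype_prod_volume_eq_pow (fun t : ℝ => Real.exp (-(1 / 2) * t ^ 2)),
    integral_gaussian, Fintype.card_fin, Real.sqrt_eq_rpow, ← Real.rpow_natCast,
    ← Real.rpow_mul (by positivity)]
  ring_nf

/-- Writing `H⁻¹ = SᵀS`, the substitution `y = S x` turns `gauss D H` into a product of
one-dimensional standard Gaussians. -/
theorem integrable_gauss_and_integral_eq_one (hH : H.PosDef) :
    Integrable (gauss D H) ∧ ∫ x, gauss D H x = 1 := by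
  obtain ⟨S, hS⟩ := exists_inv_eq_transpose_mul_self hH
  have hdet : S.det ^ 2 = H.det⁻¹ := by
    have := congrArg det hS
    rwa [det_nonsing_inv, Ring.inverse_eq_inv', det_mul, det_transpose, ← sq, eq_comm] at this
  have hS0 : S.det ≠ 0 := fun h => (inv_pos.2 hH.det_pos).ne' (by rw [← hdet, h]; ring)
  have habs : |S.det| = H.det ^ (-(1 : ℝ) / 2) := by
    rw [← Real.sqrt_sq_eq_abs, hdet, Real.sqrt_eq_rpow, Real.inv_rpow hH.det_pos.le,
      ← Real.rpow_neg hH.det_pos.le]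
    ring_nf
  have hform : ∀ x, gauss D H x = (2 * π) ^ (-(D : ℝ) / 2) * H.det ^ (-(1 : ℝ) / 2) *
      ∏ i, Real.exp (-(1 / 2) * (S *ᵥ x) i ^ 2) := by
    intro x
    rw [gauss, ← Real.exp_sum, ← Finset.mul_sum, hS, ← mulVec_mulVec, dotProduct_mulVec,
      vecMul_transpose]
    simp only [dotProduct, sq]
  have hG : Integrable fun y : Fin D → ℝ => ∏ i, Real.exp (-(1 / 2) * y i ^ 2) :=
    Integrable.fintype_prod (f := fun _ t => Real.exp (-(1 / 2) * t ^ 2))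
      fun _ => integrable_exp_neg_mul_sq (by norm_num)
  rw [funext hform]
  refine ⟨((integrable_comp_mulVec_iff hS0).2 hG).const_mul _, ?_⟩
  rw [integral_const_mul,
    integral_comp_mulVec hS0 (fun y => ∏ i, Real.exp (-(1 / 2) * y i ^ 2)),
    integral_prod_exp_neg_half_sq, habs, smul_eq_mul, mul_assoc,
    mul_inv_cancel_left₀ (Real.rpow_pos_of_pos hH.det_pos _).ne',
    ← Real.rpow_add (by positivity)]
  ring_nf
  exact Real.rpow_zero _

theorem integrable_gauss_sub (hH : H.PosDef) (a : Fin D → ℝ) :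
    Integrable fun x => gauss D H (x - a) :=
  (integrable_gauss_and_integral_eq_one hH).1.comp_sub_right a

theorem integral_gauss_sub (hH : H.PosDef) (a : Fin D → ℝ) : ∫ x, gauss D H (x - a) = 1 := by
  rw [integral_sub_right_eq_self (gauss D H) a, (integrable_gauss_and_integral_eq_one hH).2]

theorem integrable_gauss_comp {α : Type*} [MeasurableSpace α] {ν : Measure α}
    [IsFiniteMeasure ν] (hH : H.PosDef) {g : α → Fin D → ℝ} (hg : Measurable g) :
    Integrable (fun y => gauss D H (g y)) ν :=
  .of_bound ((continuous_gauss H).measurable.comp hg).aestronglyMeasurable (gauss D H 0)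
    (Filter.Eventually.of_forall fun y => by
      rw [Real.norm_of_nonneg (gauss_pos hH _).le]
      exact gauss_le_gauss_zero hH _)

end Density

section CompletingTheSquare

variable {n : Type*} [Fintype n] {P Q : Matrix n n ℝ}

theorem Matrix.IsSymm.dotProduct_mulVec_comm (hP : P.IsSymm) (u v : n → ℝ) :
    u ⬝ᵥ (P *ᵥ v) = v ⬝ᵥ (P *ᵥ u) := by
  rw [dotProduct_mulVec, ← hP.eq, vecMul_transpose, hP.eq, dotProduct_comm]

theorem sub_dotProduct_mulVec_sub_add_dotProduct_mulVec [DecidableEq n] (hP : P.IsSymm)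
    (hQ : Q.IsSymm) (hPQ : IsUnit (P + Q).det) (y d : n → ℝ) :
    (y - d) ⬝ᵥ (P *ᵥ (y - d)) + y ⬝ᵥ (Q *ᵥ y) =
      (y - (P + Q)⁻¹ *ᵥ P *ᵥ d) ⬝ᵥ ((P + Q) *ᵥ (y - (P + Q)⁻¹ *ᵥ P *ᵥ d)) +
        d ⬝ᵥ ((P - P * (P + Q)⁻¹ * P) *ᵥ d) := by
  set u := (P + Q)⁻¹ *ᵥ P *ᵥ d
  have hu : (P + Q) *ᵥ u = P *ᵥ d := by
    rw [mulVec_mulVec, mul_nonsing_inv _ hPQ, one_mulVec]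
  have hPCP : d ⬝ᵥ ((P * (P + Q)⁻¹ * P) *ᵥ d) = u ⬝ᵥ (P *ᵥ d) := by
    rw [← mulVec_mulVec, ← mulVec_mulVec, dotProduct_mulVec, ← hP.eq, vecMul_transpose, hP.eq,
      dotProduct_comm]
  simp only [mulVec_sub, dotProduct_sub, sub_dotProduct, sub_mulVec, hPCP, hu]
  rw [hP.dotProduct_mulVec_comm d y, (hP.add hQ).dotProduct_mulVec_comm u y, hu, add_mulVec,
    dotProduct_add]
  ring

end CompletingTheSquare

theorem Matrix.PosDef.isSymm {n : Type*} {A : Matrix n n ℝ} (hA : A.PosDef) : A.IsSymm :=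
  isHermitian_iff_isSymm.1 hA.isHermitian

section Convolution

variable {n : Type*} [Fintype n] [DecidableEq n] {A B : Matrix n n ℝ}

theorem det_add_mul_det_inv_add_inv (hA : A.PosDef) (hB : B.PosDef) :
    (A + B).det * ((A⁻¹ + B⁻¹)⁻¹).det = A.det * B.det := by
  have := hA.det_pos.ne'
  have := hB.det_pos.ne'
  have := (hA.add hB).det_pos.ne'
  rw [det_nonsing_inv, Ring.inverse_eq_inv',
    Matrix.inv_add_inv (by simp [hA.isUnit, hB.isUnit]), det_mul, det_mul, det_nonsing_inv,
    det_nonsing_inv, Ring.inverse_eq_inv']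
  field_simp

theorem inv_add_eq_sub (hA : A.PosDef) (hB : B.PosDef) :
    (A + B)⁻¹ = A⁻¹ - A⁻¹ * (A⁻¹ + B⁻¹)⁻¹ * A⁻¹ := by
  simpa [add_comm B⁻¹] using add_mul_mul_inv_eq_sub A 1 B 1 hA.isUnit hB.isUnit
    (by simpa [add_comm] using (hA.inv.add hB.inv).isUnit)

variable {D : ℕ} {A B : Matrix (Fin D) (Fin D) ℝ}

theorem gauss_sub_mul_gauss_sub (hA : A.PosDef) (hB : B.PosDef) (a b x : Fin D → ℝ) :
    gauss D A (x - a) * gauss D B (x - b) =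
      gauss D (A + B) (a - b) *
        gauss D (A⁻¹ + B⁻¹)⁻¹ (x - b - (A⁻¹ + B⁻¹)⁻¹ *ᵥ A⁻¹ *ᵥ (a - b)) := by
  have hPQ := hA.inv.add hB.inv
  have hquad := sub_dotProduct_mulVec_sub_add_dotProduct_mulVec hA.inv.isSymm hB.inv.isSymm
    hPQ.det_pos.ne'.isUnit (x - b) (a - b)
  rw [sub_sub_sub_cancel_right] at hquad
  have hdet : A.det ^ (-(1 : ℝ) / 2) * B.det ^ (-(1 : ℝ) / 2) =
      (A + B).det ^ (-(1 : ℝ) / 2) * ((A⁻¹ + B⁻¹)⁻¹).det ^ (-(1 : ℝ) / 2) := by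
    rw [← Real.mul_rpow hA.det_pos.le hB.det_pos.le,
      ← Real.mul_rpow (hA.add hB).det_pos.le hPQ.inv.det_pos.le,
      det_add_mul_det_inv_add_inv hA hB]
  have hexp := congrArg (fun t => Real.exp (-(1 / 2) * t)) hquad
  simp only [mul_add, Real.exp_add] at hexp
  have regroup : ∀ {c p q r s u v w z : ℝ}, p * q = r * s → u * v = w * z →
      c * p * u * (c * q * v) = c * r * z * (c * s * w) := by
    intro c p q r s u v w z h₁ h₂
    linear_combination c ^ 2 * u * v * h₁ + c ^ 2 * r * s * h₂
  simp only [gauss, nonsing_inv_nonsing_inv _ hPQ.det_pos.ne'.isUnit, inv_add_eq_sub hA hB]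
  exact regroup hdet hexp

theorem integrable_gauss_sub_mul_gauss_sub (hA : A.PosDef) (hB : B.PosDef) (a b : Fin D → ℝ) :
    Integrable fun x => gauss D A (x - a) * gauss D B (x - b) := by
  simp_rw [gauss_sub_mul_gauss_sub hA hB, sub_sub]
  exact (integrable_gauss_sub (hA.inv.add hB.inv).inv _).const_mul _

theorem integral_gauss_sub_mul_gauss_sub (hA : A.PosDef) (hB : B.PosDef) (a b : Fin D → ℝ) :
    ∫ x, gauss D A (x - a) * gauss D B (x - b) = gauss D (A + B) (a - b) := by
  simp_rw [gauss_sub_mul_gauss_sub hA hB, sub_sub]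
  rw [integral_const_mul, integral_gauss_sub (hA.inv.add hB.inv).inv, mul_one]

end Convolution

theorem integral_sub_sq {α : Type*} [MeasurableSpace α] {μ : Measure α} {u v : α → ℝ}
    (huu : Integrable (fun x => u x * u x) μ) (huv : Integrable (fun x => u x * v x) μ)
    (hvv : Integrable (fun x => v x * v x) μ) :
    ∫ x, (u x - v x) ^ 2 ∂μ =
      ∫ x, u x * u x ∂μ - 2 * ∫ x, u x * v x ∂μ + ∫ x, v x * v x ∂μ := by
  have hexpand : ∀ x, (u x - v x) ^ 2 = u x * u x - 2 * (u x * v x) + v x * v x :=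
    fun x => by ring
  simp_rw [hexpand]
  rw [integral_add (huu.sub' (huv.const_mul 2)) hvv, integral_sub huu (huv.const_mul 2),
    integral_const_mul]

section Mixture

variable {D : ℕ} {ι κ : Type*} [Fintype ι] [Fintype κ]

noncomputable def gaussMix (c : ι → ℝ) (A : ι → Matrix (Fin D) (Fin D) ℝ)
    (m : ι → Fin D → ℝ) (x : Fin D → ℝ) : ℝ :=
  ∑ a, c a * gauss D (A a) (x - m a)

variable {c : ι → ℝ} {A : ι → Matrix (Fin D) (Fin D) ℝ} {m : ι → Fin D → ℝ}
  {d : κ → ℝ} {B : κ → Matrix (Fin D) (Fin D) ℝ} {p : κ → Fin D → ℝ}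

@[fun_prop]
theorem continuous_gaussMix (c : ι → ℝ) (A : ι → Matrix (Fin D) (Fin D) ℝ)
    (m : ι → Fin D → ℝ) :
    Continuous (gaussMix c A m) := by
  unfold gaussMix
  fun_prop

theorem gaussMix_nonneg (hc : ∀ a, 0 ≤ c a) (hA : ∀ a, (A a).PosDef) (x : Fin D → ℝ) :
    0 ≤ gaussMix c A m x :=
  Finset.sum_nonneg fun a _ => mul_nonneg (hc a) (gauss_pos (hA a) _).le

theorem integrable_gaussMix (hA : ∀ a, (A a).PosDef) : Integrable (gaussMix c A m) :=
  integrable_finsetSum _ fun a _ => (integrable_gauss_sub (hA a) _).const_mul _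

theorem integral_gaussMix (hA : ∀ a, (A a).PosDef) : ∫ x, gaussMix c A m x = ∑ a, c a := by
  simp only [gaussMix]
  rw [integral_finsetSum _ fun a _ => (integrable_gauss_sub (hA a) _).const_mul _]
  simp [integral_const_mul, integral_gauss_sub (hA _)]

theorem integrable_gauss_sub_mul_gaussMix {A : Matrix (Fin D) (Fin D) ℝ} (hA : A.PosDef)
    (hB : ∀ b, (B b).PosDef) (a : Fin D → ℝ) :
    Integrable fun x => gauss D A (x - a) * gaussMix d B p x := by
  simp only [gaussMix, Finset.mul_sum, mul_left_comm (gauss D A _)]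
  exact integrable_finsetSum _ fun b _ =>
    (integrable_gauss_sub_mul_gauss_sub hA (hB b) _ _).const_mul _

theorem integral_gauss_sub_mul_gaussMix {A : Matrix (Fin D) (Fin D) ℝ} (hA : A.PosDef)
    (hB : ∀ b, (B b).PosDef) (a : Fin D → ℝ) :
    ∫ x, gauss D A (x - a) * gaussMix d B p x = gaussMix d (fun b => A + B b) p a := by
  simp only [gaussMix, Finset.mul_sum, mul_left_comm (gauss D A _)]
  rw [integral_finsetSum _ fun b _ =>
    (integrable_gauss_sub_mul_gauss_sub hA (hB b) _ _).const_mul _]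
  simp [integral_const_mul, integral_gauss_sub_mul_gauss_sub hA (hB _)]

theorem integrable_gaussMix_mul_gaussMix (hA : ∀ a, (A a).PosDef) (hB : ∀ b, (B b).PosDef) :
    Integrable fun x => gaussMix c A m x * gaussMix d B p x := by
  simp only [gaussMix.eq_1 c A m, Finset.sum_mul, mul_assoc]
  exact integrable_finsetSum _ fun a _ =>
    (integrable_gauss_sub_mul_gaussMix (hA a) hB _).const_mul _

theorem integral_gaussMix_mul_gaussMix (hA : ∀ a, (A a).PosDef) (hB : ∀ b, (B b).PosDef) :
    ∫ x, gaussMix c A m x * gaussMix d B p x =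
      ∑ a, c a * gaussMix d (fun b => A a + B b) p (m a) := by
  simp only [gaussMix.eq_1 c A m, Finset.sum_mul, mul_assoc]
  rw [integral_finsetSum _ fun a _ =>
    (integrable_gauss_sub_mul_gaussMix (hA a) hB _).const_mul _]
  simp [integral_const_mul, integral_gauss_sub_mul_gaussMix (hA _) hB]

theorem integrable_gaussMix_of_isFiniteMeasure {ν : Measure (Fin D → ℝ)} [IsFiniteMeasure ν]
    (hA : ∀ a, (A a).PosDef) : Integrable (gaussMix c A m) ν :=
  integrable_finsetSum _ fun a _ => (integrable_gauss_comp (hA a) (by fun_prop)).const_mul _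

theorem sum_mul_gaussMix_eq_dotProduct_mulVec (w : ι → ℝ) (m : ι → Fin D → ℝ)
    {B : ι → ι → Matrix (Fin D) (Fin D) ℝ} {Ω : Matrix ι ι ℝ}
    (hΩ : ∀ i j, Ω i j = gauss D (B i j) (m i - m j)) :
    ∑ i, w i * gaussMix w (B i) m (m i) = w ⬝ᵥ (Ω *ᵥ w) := by
  simp [gaussMix, dotProduct, mulVec, hΩ, mul_comm]

theorem integral_sq_kde_sub_gaussMix {H : Matrix (Fin D) (Fin D) ℝ} (hH : H.PosDef)
    (hB : ∀ b, (B b).PosDef) (r : ℝ) (xs : ι → Fin D → ℝ) :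
    ∫ x, (r * ∑ i, gauss D H (x - xs i) - gaussMix d B p x) ^ 2 =
      r ^ 2 * ∑ i, ∑ j, gauss D (H + H) (xs i - xs j)
        - 2 * r * ∑ i, gaussMix d (fun b => H + B b) p (xs i)
        + ∑ b, d b * gaussMix d (fun b' => B b + B b') p (p b) := by
  have hkde : ∀ x, r * ∑ i, gauss D H (x - xs i) = gaussMix (fun _ => r) (fun _ => H) xs x :=
    fun x => by simp [gaussMix, Finset.mul_sum]
  have hH' : ∀ _ : ι, H.PosDef := fun _ => hH
  have hpairs : ∑ i, r * gaussMix (fun _ => r) (fun _ => H + H) xs (xs i) =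
      r ^ 2 * ∑ i, ∑ j, gauss D (H + H) (xs i - xs j) := by
    simp only [gaussMix, Finset.mul_sum]
    exact Finset.sum_congr rfl fun i _ => Finset.sum_congr rfl fun j _ => by ring
  simp_rw [hkde]
  rw [integral_sub_sq (integrable_gaussMix_mul_gaussMix hH' hH')
      (integrable_gaussMix_mul_gaussMix hH' hB) (integrable_gaussMix_mul_gaussMix hB hB),
    integral_gaussMix_mul_gaussMix hH' hH', integral_gaussMix_mul_gaussMix hH' hB,
    integral_gaussMix_mul_gaussMix hB hB, hpairs, ← Finset.mul_sum, mul_assoc]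

end Mixture

section WithDensity

variable {E : Type*} [MeasurableSpace E] {ι : Type*} [Fintype ι] {μ : Measure E} {f : E → ℝ}

theorem integral_withDensity_ofReal (hfm : Measurable f) (hf0 : 0 ≤ f) (g : E → ℝ) :
    ∫ x, g x ∂μ.withDensity (fun x => ENNReal.ofReal (f x)) = ∫ x, g x * f x ∂μ := by
  rw [integral_withDensity_eq_integral_toReal_smul (by fun_prop)
    (Filter.Eventually.of_forall fun _ => ENNReal.ofReal_lt_top)]
  simp [ENNReal.toReal_ofReal (hf0 _), mul_comm]

theorem isProbabilityMeasure_withDensity_ofReal (hf : Integrable f μ) (hf0 : 0 ≤ f)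
    (hf1 : ∫ x, f x ∂μ = 1) :
    IsProbabilityMeasure (μ.withDensity fun x => ENNReal.ofReal (f x)) := by
  constructor
  rw [withDensity_apply _ MeasurableSet.univ, Measure.restrict_univ,
    ← ofReal_integral_eq_lintegral_ofReal hf (Filter.Eventually.of_forall hf0), hf1,
    ENNReal.ofReal_one]

theorem pi_withDensity_ofReal [SigmaFinite μ] (hf : Integrable f μ) (hf0 : 0 ≤ f) :
    Measure.pi (fun _ : ι => μ.withDensity fun x => ENNReal.ofReal (f x)) =
      (Measure.pi fun _ : ι => μ).withDensity fun x => ENNReal.ofReal (∏ i, f (x i)) := by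
  have := isFiniteMeasure_withDensity_ofReal (μ := μ) hf.2
  refine Measure.pi_eq fun s hs => ?_
  rw [withDensity_apply _ (MeasurableSet.univ_pi hs), Measure.restrict_pi_pi,
    ← ofReal_integral_eq_lintegral_ofReal, integral_fintype_prod_eq_prod,
    ENNReal.ofReal_prod_of_nonneg]
  · refine Finset.prod_congr rfl fun i _ => ?_
    rw [withDensity_apply _ (hs i), ofReal_integral_eq_lintegral_ofReal hf.integrableOn
      (Filter.Eventually.of_forall hf0)]
  · exact fun i _ => integral_nonneg hf0
  · exact Integrable.fintype_prod fun i => hf.integrableOn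
  · exact Filter.Eventually.of_forall fun x => Finset.prod_nonneg fun i _ => hf0 _

theorem integral_mul_prod_eq_integral_pi_withDensity [SigmaFinite μ] (hfm : Measurable f)
    (hf : Integrable f μ) (hf0 : 0 ≤ f) (F : (ι → E) → ℝ) :
    ∫ x, F x * ∏ i, f (x i) ∂Measure.pi (fun _ => μ) =
      ∫ x, F x ∂Measure.pi (fun _ => μ.withDensity fun y => ENNReal.ofReal (f y)) := by
  rw [pi_withDensity_ofReal hf hf0, integral_withDensity_ofReal
    (Finset.measurable_prod (f := fun i (x : ι → E) => f (x i)) _ fun i _ => by fun_prop)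
    (fun x => Finset.prod_nonneg fun i _ => hf0 _)]

end WithDensity

section IndependentCoordinates

variable {ι : Type*} [Fintype ι] {α : ι → Type*} [∀ i, MeasurableSpace (α i)]
  {μ : ∀ i, Measure (α i)} [∀ i, IsProbabilityMeasure (μ i)]

theorem measurePreserving_eval_prod_eval {i j : ι} (hij : i ≠ j) :
    MeasurePreserving (fun x : ∀ i, α i => (x i, x j)) (Measure.pi μ) ((μ i).prod (μ j)) := by
  refine ⟨by fun_prop, ?_⟩
  have hind : IndepFun (fun x : ∀ i, α i => x i) (fun x => x j) (Measure.pi μ) :=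
    (iIndepFun_pi (μ := μ) (X := fun i => id) fun _ => aemeasurable_id).indepFun hij
  rw [(indepFun_iff_map_prod_eq_prod_map_map (measurable_pi_apply i).aemeasurable
    (measurable_pi_apply j).aemeasurable).1 hind, (measurePreserving_eval μ i).map_eq,
    (measurePreserving_eval μ j).map_eq]

end IndependentCoordinates

section IidSample

variable {E : Type*} [MeasurableSpace E] {ι : Type*} [Fintype ι] {μ : Measure E}
  [IsProbabilityMeasure μ] {k : E → E → ℝ}

theorem integrable_comp_eval_eval (hk : Integrable (fun z : E × E => k z.1 z.2) (μ.prod μ))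
    (hdiag : Integrable (fun x => k x x) μ) (i j : ι) :
    Integrable (fun x : ι → E => k (x i) (x j)) (Measure.pi fun _ => μ) := by
  obtain rfl | hij := eq_or_ne i j
  · exact integrable_comp_eval (μ := fun _ => μ) hdiag
  · exact (measurePreserving_eval_prod_eval (μ := fun _ => μ) hij).integrable_comp_of_integrable
      hk

theorem integral_comp_eval_eval [DecidableEq ι]
    (hk : Integrable (fun z : E × E => k z.1 z.2) (μ.prod μ))
    (hdiag : Integrable (fun x => k x x) μ) (i j : ι) :
    ∫ x, k (x i) (x j) ∂Measure.pi (fun _ => μ) =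
      if i = j then ∫ x, k x x ∂μ else ∫ z, k z.1 z.2 ∂μ.prod μ := by
  split_ifs with hij
  · subst hij
    exact integral_comp_eval (μ := fun _ => μ) hdiag.aestronglyMeasurable
  · have h := measurePreserving_eval_prod_eval (μ := fun _ : ι => μ) hij
    rw [← h.map_eq, integral_map h.measurable.aemeasurable (h.map_eq ▸ hk.aestronglyMeasurable)]

theorem integral_sum_sum_comp_eval_eval (hk : Integrable (fun z : E × E => k z.1 z.2) (μ.prod μ))
    (hdiag : Integrable (fun x => k x x) μ) :
    ∫ x, ∑ i, ∑ j, k (x i) (x j) ∂Measure.pi (fun _ : ι => μ) =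
      Fintype.card ι * ∫ x, k x x ∂μ +
        (Fintype.card ι * (Fintype.card ι - 1)) * ∫ z, k z.1 z.2 ∂μ.prod μ := by
  classical
  rw [integral_finsetSum _ fun i _ =>
    integrable_finsetSum _ fun j _ => integrable_comp_eval_eval hk hdiag i j]
  simp_rw [integral_finsetSum _ fun j _ => integrable_comp_eval_eval hk hdiag _ j,
    integral_comp_eval_eval hk hdiag]
  have hsplit : ∀ i j : ι,
      (if i = j then ∫ x, k x x ∂μ else ∫ z, k z.1 z.2 ∂μ.prod μ) =
        (∫ z, k z.1 z.2 ∂μ.prod μ) +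
        if i = j then (∫ x, k x x ∂μ) - ∫ z, k z.1 z.2 ∂μ.prod μ else 0 := by
    intro i j
    split_ifs <;> ring
  simp only [hsplit, Finset.sum_add_distrib, Finset.sum_ite_eq, Finset.mem_univ, if_true,
    Finset.sum_const, Finset.card_univ, nsmul_eq_mul]
  ring

theorem integral_pi_sum_sum_sub_sum_add (hk : Integrable (fun z : E × E => k z.1 z.2) (μ.prod μ))
    (hdiag : Integrable (fun x => k x x) μ) {h : E → ℝ} (hh : Integrable h μ) (a b C : ℝ) :
    ∫ x, a * ∑ i, ∑ j, k (x i) (x j) - b * ∑ i, h (x i) + C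
        ∂Measure.pi (fun _ : ι => μ) =
      a * (Fintype.card ι * ∫ x, k x x ∂μ +
          (Fintype.card ι * (Fintype.card ι - 1)) * ∫ z, k z.1 z.2 ∂μ.prod μ)
        - b * (Fintype.card ι * ∫ x, h x ∂μ) + C := by
  have hpairs := integrable_finsetSum Finset.univ fun i _ =>
    integrable_finsetSum Finset.univ fun j _ => integrable_comp_eval_eval hk hdiag (i : ι) j
  have hmeans := integrable_finsetSum Finset.univ fun i _ =>
    integrable_comp_eval (μ := fun _ : ι => μ) (i := i) hh
  rw [integral_add ((hpairs.const_mul a).sub' (hmeans.const_mul b)) (integrable_const C),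
    integral_sub (hpairs.const_mul a) (hmeans.const_mul b), integral_const_mul,
    integral_const_mul, integral_const, integral_sum_sum_comp_eval_eval hk hdiag,
    integral_finsetSum _ fun i _ => integrable_comp_eval hh]
  simp [integral_comp_eval (μ := fun _ : ι => μ) hh.aestronglyMeasurable]

end IidSample

section MixtureLaw

variable {D : ℕ} {ι κ : Type*} [Fintype ι] [Fintype κ]
  {c : ι → ℝ} {A : ι → Matrix (Fin D) (Fin D) ℝ} {m : ι → Fin D → ℝ}
  {d : κ → ℝ} {B : κ → Matrix (Fin D) (Fin D) ℝ} {p : κ → Fin D → ℝ}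

noncomputable def gaussMixMeasure (d : κ → ℝ) (B : κ → Matrix (Fin D) (Fin D) ℝ)
    (p : κ → Fin D → ℝ) : Measure (Fin D → ℝ) :=
  volume.withDensity fun x => ENNReal.ofReal (gaussMix d B p x)

theorem isProbabilityMeasure_gaussMixMeasure (hd : ∀ b, 0 ≤ d b) (hd1 : ∑ b, d b = 1)
    (hB : ∀ b, (B b).PosDef) : IsProbabilityMeasure (gaussMixMeasure d B p) :=
  isProbabilityMeasure_withDensity_ofReal (integrable_gaussMix hB) (gaussMix_nonneg hd hB)
    (by rw [integral_gaussMix hB, hd1])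

theorem integral_gaussMixMeasure (hd : ∀ b, 0 ≤ d b) (hB : ∀ b, (B b).PosDef)
    (g : (Fin D → ℝ) → ℝ) :
    ∫ x, g x ∂gaussMixMeasure d B p = ∫ x, g x * gaussMix d B p x :=
  integral_withDensity_ofReal (continuous_gaussMix d B p).measurable (gaussMix_nonneg hd hB) g

theorem integral_mul_prod_gaussMix (hd : ∀ b, 0 ≤ d b) (hB : ∀ b, (B b).PosDef)
    (F : (ι → Fin D → ℝ) → ℝ) :
    ∫ x, F x * ∏ i, gaussMix d B p (x i) =
      ∫ x, F x ∂Measure.pi fun _ => gaussMixMeasure d B p :=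
  integral_mul_prod_eq_integral_pi_withDensity (continuous_gaussMix d B p).measurable
    (integrable_gaussMix hB) (gaussMix_nonneg hd hB) F

theorem integral_gaussMix_gaussMixMeasure (hA : ∀ a, (A a).PosDef) (hd : ∀ b, 0 ≤ d b)
    (hB : ∀ b, (B b).PosDef) :
    ∫ x, gaussMix c A m x ∂gaussMixMeasure d B p =
      ∑ a, c a * gaussMix d (fun b => A a + B b) p (m a) := by
  rw [integral_gaussMixMeasure hd hB, integral_gaussMix_mul_gaussMix hA hB]

theorem integral_gauss_sub_gaussMixMeasure_prod {H : Matrix (Fin D) (Fin D) ℝ} (hH : H.PosDef)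
    (hd : ∀ b, 0 ≤ d b) (hd1 : ∑ b, d b = 1) (hB : ∀ b, (B b).PosDef) :
    ∫ z, gauss D H (z.1 - z.2) ∂(gaussMixMeasure d B p).prod (gaussMixMeasure d B p) =
      ∑ b, d b * gaussMix d (fun b' => H + B b + B b') p (p b) := by
  have := isProbabilityMeasure_gaussMixMeasure hd hd1 hB (p := p)
  rw [integral_prod_symm _ (integrable_gauss_comp hH (by fun_prop))]
  simp only [integral_gaussMixMeasure hd hB (fun x => gauss D H (x - _)),
    integral_gauss_sub_mul_gaussMix hH hB]
  exact integral_gaussMix_gaussMixMeasure (fun b => hH.add (hB b)) hd hB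

end MixtureLaw

/-- Expected ISE between the kernel estimator and the true Gaussian mixture:
`E[d_ISE(f̂, f)] = (1/n)(4π)^{-D/2}|H|^{-1/2} + wᵀ((1 − 1/n)Ω₂ − 2Ω₁ + Ω₀)w`. -/
theorem expected_ise_kde_truth (D L n : ℕ) (hn : 0 < n)
    (w : Fin L → ℝ) (hw : ∀ ℓ, 0 ≤ w ℓ) (hw1 : ∑ ℓ, w ℓ = 1)
    (Cov : Fin L → Matrix (Fin D) (Fin D) ℝ) (hCov : ∀ ℓ, (Cov ℓ).PosDef)
    (μs : Fin L → (Fin D → ℝ))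
    (H : Matrix (Fin D) (Fin D) ℝ) (hH : H.PosDef)
    (f : (Fin D → ℝ) → ℝ)
    (hf : ∀ x, f x = ∑ ℓ, w ℓ * gauss D (Cov ℓ) (x - μs ℓ))
    (Ω₀ Ω₁ Ω₂ : Matrix (Fin L) (Fin L) ℝ)
    (hΩ₀ : ∀ i j, Ω₀ i j = gauss D (Cov i + Cov j) (μs i - μs j))
    (hΩ₁ : ∀ i j, Ω₁ i j = gauss D (H + Cov i + Cov j) (μs i - μs j))
    (hΩ₂ : ∀ i j, Ω₂ i j = gauss D (2 • H + Cov i + Cov j) (μs i - μs j)) :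
    ∫ xs : Fin n → Fin D → ℝ,
        (∫ x : Fin D → ℝ,
            ((1 / (n : ℝ)) * ∑ i, gauss D H (x - xs i) - f x) ^ 2) *
          ∏ i, f (xs i) =
      (1 / (n : ℝ)) * (4 * Real.pi) ^ (-(D : ℝ) / 2) * H.det ^ (-(1 : ℝ) / 2)
        + w ⬝ᵥ (((1 - 1 / (n : ℝ)) • Ω₂ - 2 • Ω₁ + Ω₀) *ᵥ w) := by
  obtain rfl : f = gaussMix w Cov μs := funext hf
  have := isProbabilityMeasure_gaussMixMeasure hw hw1 hCov (p := μs)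
  have hHH := hH.add hH
  have hΩ₂' : ∀ i j, Ω₂ i j = gauss D (H + H + Cov i + Cov j) (μs i - μs j) := by
    simpa only [two_nsmul] using hΩ₂
  rw [integral_mul_prod_gaussMix hw hCov]
  simp_rw [integral_sq_kde_sub_gaussMix hH hCov]
  rw [integral_pi_sum_sum_sub_sum_add (k := fun u v => gauss D (H + H) (u - v))
      (integrable_gauss_comp hHH (by fun_prop)) (integrable_gauss_comp hHH (by fun_prop))
      (integrable_gaussMix_of_isFiniteMeasure fun ℓ => hH.add (hCov ℓ)),
    integral_gauss_sub_gaussMixMeasure_prod hHH hw hw1 hCov,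
    integral_gaussMix_gaussMixMeasure (fun ℓ => hH.add (hCov ℓ)) hw hCov,
    sum_mul_gaussMix_eq_dotProduct_mulVec w μs hΩ₀,
    sum_mul_gaussMix_eq_dotProduct_mulVec w μs hΩ₁,
    sum_mul_gaussMix_eq_dotProduct_mulVec w μs hΩ₂']
  -- before `nsmul_eq_mul`, which would turn the matrix `2 • Ω₁` into the product `2 * Ω₁`
  simp only [add_mulVec, sub_mulVec, smul_mulVec, dotProduct_add, dotProduct_sub, dotProduct_smul]
  simp only [sub_self, integral_const, probReal_univ, gauss_add_self_zero hH, Fintype.card_fin,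
    smul_eq_mul, nsmul_eq_mul]
  field_simp
  ring
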